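/- Fix an integer n ≥ 2 and let X_2, ..., X_n be independent random variables, where X_k is exponentially distributed with rate (k-1)/2, and let L_n := Σ_{k=2}^{n} X_k. Then for every positive integer j, E[L_n^j] = j! 2^j Σ_{1 ≤ k_1 ≤ ... ≤ k_j ≤ n-1} 1/(k_1 ⋯ k_j), where the sum extends over all nondecreasing j-tuples of integers between 1 and n-1. -/

import Mathlib

/-!
An exponential variable of rate `r` has moments `E[X^d] = d! c^d` with `c = 1/r`. Expanding
`(∑ X_i)^j` by the multinomial theorem and using independence, each multinomial coefficient cancels
against the factorials of the moments, so `E[L^j] = j! h_j(c)`, where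
`h_j(c) = ∑_{|s| = j} ∏_{i ∈ s} c_i` sums over multisets `s` of indices. Listing a multiset in
increasing order identifies it with a nondecreasing `j`-tuple, and here `c_k = 2/k`.
-/

open MeasureTheory ProbabilityTheory

section GammaMoments

open Real Set

variable {a r : ℝ}

lemma toReal_gammaPDF_mul_pow_ae_eq (ha : 0 < a) (hr : 0 < r) (m : ℕ) :
    (fun x => (gammaPDF a r x).toReal * x ^ m) =ᵐ[volume]
      (Ioi 0).indicator fun x => r ^ a / Gamma a * (x ^ (a + m - 1) * exp (-(r * x))) := by
  filter_upwards [Measure.ae_ne volume 0] with x hx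
  rcases hx.lt_or_gt with hneg | hpos
  · simp [gammaPDF_of_neg hneg, hneg.le]
  · rw [gammaPDF_of_nonneg hpos.le, ENNReal.toReal_ofReal (by positivity),
      indicator_of_mem (mem_Ioi.2 hpos), add_sub_right_comm, rpow_add hpos, rpow_natCast]
    ring

lemma integrable_pow_gammaMeasure (ha : 0 < a) (hr : 0 < r) (m : ℕ) :
    Integrable (fun x : ℝ => x ^ m) (gammaMeasure a r) := by
  rw [gammaMeasure, integrable_withDensity_iff_integrable_smul'
      (f := gammaPDF a r) (measurable_gammaPDFReal a r).ennreal_ofReal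
      (ae_of_all _ fun _ => ENNReal.ofReal_lt_top)]
  simp only [smul_eq_mul]
  rw [integrable_congr (toReal_gammaPDF_mul_pow_ae_eq ha hr m),
    integrable_indicator_iff measurableSet_Ioi]
  have hint := integrableOn_rpow_mul_exp_neg_mul_rpow (s := a + m - 1)
    (by linarith [(Nat.cast_nonneg m : (0 : ℝ) ≤ m)]) zero_lt_one hr
  simp only [rpow_one, neg_mul] at hint
  exact hint.const_mul _

lemma integral_pow_gammaMeasure (ha : 0 < a) (hr : 0 < r) (m : ℕ) :
    ∫ x, x ^ m ∂gammaMeasure a r = Gamma (a + m) / (Gamma a * r ^ m) := by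
  rw [gammaMeasure, integral_withDensity_eq_integral_toReal_smul
      (f := gammaPDF a r) (measurable_gammaPDFReal a r).ennreal_ofReal
      (ae_of_all _ fun _ => ENNReal.ofReal_lt_top)]
  simp only [smul_eq_mul]
  rw [integral_congr_ae (toReal_gammaPDF_mul_pow_ae_eq ha hr m),
    integral_indicator measurableSet_Ioi, integral_const_mul,
    integral_rpow_mul_exp_neg_mul_Ioi (by positivity) hr, div_rpow zero_le_one hr.le, one_rpow,
    rpow_add hr, rpow_natCast]
  have := (Gamma_pos_of_pos ha).ne'
  field_simp

lemma integrable_pow_expMeasure (hr : 0 < r) (m : ℕ) :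
    Integrable (fun x : ℝ => x ^ m) (expMeasure r) :=
  integrable_pow_gammaMeasure zero_lt_one hr m

lemma integral_pow_expMeasure (hr : 0 < r) (m : ℕ) :
    ∫ x, x ^ m ∂expMeasure r = m.factorial / r ^ m := by
  rw [expMeasure, integral_pow_gammaMeasure zero_lt_one hr, add_comm, Gamma_nat_eq_factorial,
    Gamma_one, one_mul]

end GammaMoments

section Combinatorics

open Finset

lemma sum_piAntidiag_prod_pow_eq_sum_sym {α R : Type*} [Fintype α] [DecidableEq α]
    [CommSemiring R] (w : α → R) (j : ℕ) :
    ∑ k ∈ univ.piAntidiag j, ∏ i, w i ^ k i = ∑ s : Sym α j, ((s : Multiset α).map w).prod := by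
  rw [← map_sym_eq_piAntidiag, sum_map, sym_univ]
  refine sum_congr rfl fun s _ => ?_
  change ∏ i, w i ^ (s : Multiset α).count i = _
  rw [prod_multiset_map_count]
  refine (prod_subset (subset_univ _) fun i _ hi => ?_).symm
  rw [Multiset.count_eq_zero_of_notMem (by simpa using hi), pow_zero]

namespace Sym

variable (α : Type*) [LinearOrder α] (n : ℕ)

noncomputable def sortEquiv : Sym α n ≃ {f : Fin n → α // Monotone f} :=
  .symm <| Equiv.ofBijective (fun f => ⟨List.ofFn f.1, by simp⟩) <| by
    constructor
    · rintro ⟨f, hf⟩ ⟨g, hg⟩ hfg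
      have hperm : (List.ofFn f).Perm (List.ofFn g) :=
        Multiset.coe_eq_coe.1 (congrArg Subtype.val hfg)
      exact Subtype.ext <|
        List.ofFn_injective (hperm.eq_of_sortedLE hf.sortedLE_ofFn hg.sortedLE_ofFn)
    · rintro ⟨s, rfl⟩
      have hsorted : (s.sort).SortedLE :=
        List.sortedLE_iff_pairwise.2 (Multiset.pairwise_sort s _)
      refine ⟨⟨fun i => (s.sort)[i.1]'(by simp), fun i i' h => hsorted (Fin.mk_le_mk.2 h)⟩, ?_⟩
      refine Subtype.ext ?_
      change ((List.ofFn fun i : Fin s.card => (s.sort)[i.1]'(by simp) : List α) : Multiset α) = s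
      conv_rhs => rw [← Multiset.sort_eq s (· ≤ ·)]
      congr 1
      exact List.ext_getElem (by simp) fun _ _ _ => by simp

lemma coe_sortEquiv_symm (f : {f : Fin n → α // Monotone f}) :
    ((sortEquiv α n).symm f : Multiset α) = List.ofFn f.1 := rfl

end Sym

end Combinatorics

namespace ProbabilityTheory

open Finset

variable {Ω ι : Type*} [MeasurableSpace Ω] {μ : Measure Ω} [Fintype ι] {X : ι → Ω → ℝ}

lemma iIndepFun.integrable_fun_prod (hX : iIndepFun X μ) (hmeas : ∀ i, Measurable (X i))
    (hint : ∀ i, Integrable (X i) μ) : Integrable (fun ω => ∏ i, X i ω) μ := by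
  refine ⟨(Finset.measurable_prod _ fun i _ => hmeas i).aestronglyMeasurable, ?_⟩
  have hnorm : iIndepFun (fun i ω => (‖X i ω‖₊ : ENNReal)) μ :=
    hX.comp _ fun _ => measurable_nnnorm.coe_nnreal_ennreal
  simp only [HasFiniteIntegral, enorm_eq_nnnorm, nnnorm_prod, ENNReal.ofNNReal_finsetProd]
  rw [lintegral_prod_eq_prod_lintegral_of_indepFun _ _ hnorm
    fun i => (hmeas i).nnnorm.coe_nnreal_ennreal]
  exact ENNReal.prod_lt_top fun i _ => (hint i).hasFiniteIntegral

lemma iIndepFun.integral_sum_pow [DecidableEq ι] (hX : iIndepFun X μ)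
    (hmeas : ∀ i, Measurable (X i)) (hint : ∀ i d, Integrable (fun ω => X i ω ^ d) μ) (j : ℕ) :
    ∫ ω, (∑ i, X i ω) ^ j ∂μ =
      ∑ k ∈ univ.piAntidiag j, (Nat.multinomial univ k : ℝ) * ∏ i, ∫ ω, X i ω ^ k i ∂μ := by
  have hpow (k : ι → ℕ) : iIndepFun (fun i ω => X i ω ^ k i) μ :=
    hX.comp _ fun i => measurable_id.pow_const (k i)
  simp_rw [sum_pow_eq_sum_piAntidiag]
  rw [integral_finsetSum _ fun k _ =>
    ((hpow k).integrable_fun_prod (fun i => (hmeas i).pow_const _) (hint · _)).const_mul _]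
  refine sum_congr rfl fun k _ => ?_
  rw [integral_const_mul, (hpow k).integral_fun_prod_eq_prod_integral
    fun i => (hint i (k i)).aestronglyMeasurable]

lemma iIndepFun.integral_sum_pow_eq_factorial_mul_sum_sym [DecidableEq ι] (hX : iIndepFun X μ)
    (hmeas : ∀ i, Measurable (X i)) (hint : ∀ i d, Integrable (fun ω => X i ω ^ d) μ)
    (c : ι → ℝ) (hmom : ∀ i d, ∫ ω, X i ω ^ d ∂μ = d.factorial * c i ^ d) (j : ℕ) :
    ∫ ω, (∑ i, X i ω) ^ j ∂μ = j.factorial * ∑ s : Sym ι j, ((s : Multiset ι).map c).prod := by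
  rw [hX.integral_sum_pow hmeas hint, ← sum_piAntidiag_prod_pow_eq_sum_sym, mul_sum]
  refine sum_congr rfl fun k hk => ?_
  simp_rw [hmom, prod_mul_distrib, ← mul_assoc]
  norm_cast
  rw [mul_comm (Nat.multinomial _ _), Nat.multinomial_spec, (mem_piAntidiag.1 hk).1]

end ProbabilityTheory

def monotoneFinEquivBounded (m j : ℕ) :
    {g : Fin j → Fin m // Monotone g} ≃
      {f : Fin j → ℕ // Monotone f ∧ ∀ i, 1 ≤ f i ∧ f i ≤ m} where
  toFun g := ⟨fun t => g.1 t + 1, fun _ _ h => Nat.succ_le_succ (g.2 h),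
    fun t => ⟨Nat.le_add_left 1 _, (g.1 t).isLt⟩⟩
  invFun f := ⟨fun t => ⟨f.1 t - 1, by have := f.2.2 t; omega⟩,
    fun _ _ h => Fin.mk_le_mk.2 (Nat.sub_le_sub_right (f.2.1 h) 1)⟩
  left_inv g := by ext; simp
  right_inv f := by ext t; have := f.2.2 t; simp only; omega

lemma tsum_monotone_bounded_eq_sum_sym (m j : ℕ) (w : ℕ → ℝ) :
    ∑' f : {f : Fin j → ℕ // Monotone f ∧ ∀ i, 1 ≤ f i ∧ f i ≤ m}, ∏ i, w (f.1 i) =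
      ∑ s : Sym (Fin m) j, ((s : Multiset (Fin m)).map fun i : Fin m => w (i + 1)).prod := by
  rw [← tsum_fintype (L := .unconditional _), ← (Sym.sortEquiv (Fin m) j).symm.tsum_eq,
    ← (monotoneFinEquivBounded m j).tsum_eq]
  refine tsum_congr fun g => ?_
  simp [Sym.coe_sortEquiv_symm, List.prod_ofFn, monotoneFinEquivBounded]

theorem stmt_11_general {Ω : Type*} [MeasureSpace Ω] [IsProbabilityMeasure (ℙ : Measure Ω)]
    (n : ℕ)
    (X : Fin (n - 1) → Ω → ℝ) (hmeas : ∀ i, Measurable (X i))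
    (hind : iIndepFun X ℙ)
    (hdist : ∀ i : Fin (n - 1), Measure.map (X i) ℙ
      = expMeasure ((((i : ℕ) : ℝ) + 1) / 2)) :
    ∀ j : ℕ, 1 ≤ j →
      (∫ ω, (∑ i, X i ω) ^ j ∂ℙ)
        = (j.factorial : ℝ) * 2 ^ j *
            ∑' f : {f : Fin j → ℕ // Monotone f ∧ ∀ i, 1 ≤ f i ∧ f i ≤ n - 1},
              ∏ i, 1 / (f.1 i : ℝ) := by
  intro j _
  have hrate (i : Fin (n - 1)) : 0 < (((i : ℕ) : ℝ) + 1) / 2 := by positivity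
  have hint (i : Fin (n - 1)) (d : ℕ) : Integrable (fun ω => X i ω ^ d) ℙ := by
    have := integrable_pow_expMeasure (hrate i) d
    rw [← hdist i] at this
    exact (integrable_map_measure (continuous_pow d).aestronglyMeasurable
      (hmeas i).aemeasurable).1 this
  have hmom (i : Fin (n - 1)) (d : ℕ) :
      ∫ ω, X i ω ^ d ∂ℙ = d.factorial * (2 * (1 / (((i : ℕ) + 1 : ℕ) : ℝ))) ^ d := by
    rw [← integral_map (f := fun x : ℝ => x ^ d) (hmeas i).aemeasurable
      (continuous_pow d).aestronglyMeasurable, hdist i, integral_pow_expMeasure (hrate i)]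
    push_cast
    rw [mul_one_div, div_eq_mul_inv, ← inv_pow, inv_div]
  calc ∫ ω, (∑ i, X i ω) ^ j ∂ℙ
      = j.factorial * ∑ s : Sym (Fin (n - 1)) j, ((s : Multiset (Fin (n - 1))).map
          fun i : Fin (n - 1) => 2 * (1 / (((i : ℕ) + 1 : ℕ) : ℝ))).prod :=
        hind.integral_sum_pow_eq_factorial_mul_sum_sym hmeas hint _ hmom j
    _ = j.factorial * 2 ^ j * ∑ s : Sym (Fin (n - 1)) j, ((s : Multiset (Fin (n - 1))).map
          fun i : Fin (n - 1) => 1 / (((i : ℕ) + 1 : ℕ) : ℝ)).prod := by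
        rw [mul_assoc]
        congr 1
        rw [Finset.mul_sum]
        refine Finset.sum_congr rfl fun s _ => ?_
        rw [Multiset.prod_map_mul, Multiset.map_const', Multiset.prod_replicate, Sym.card_coe]
    _ = _ := congrArg _ (tsum_monotone_bounded_eq_sum_sym (n - 1) j fun k => 1 / (k : ℝ)).symm

/-- Fix `n ≥ 2` and let `X_2, …, X_n` be independent random variables, `X_k`
exponential with rate `(k-1)/2` (here `X i` for `i : Fin (n-1)` stands for
`X_{i+2}`), and let `L_n := Σ_{k=2}^n X_k`.  Then for every `j ≥ 1`,
`E[L_n^j] = j! 2^j Σ_{1 ≤ k_1 ≤ … ≤ k_j ≤ n-1} 1/(k_1 ⋯ k_j)`, the sum extending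
over all nondecreasing `j`-tuples of integers between `1` and `n-1`. -/
theorem stmt_11 {Ω : Type*} [MeasureSpace Ω] [IsProbabilityMeasure (ℙ : Measure Ω)]
    (n : ℕ) (hn : 2 ≤ n)
    (X : Fin (n - 1) → Ω → ℝ) (hmeas : ∀ i, Measurable (X i))
    (hind : iIndepFun X ℙ)
    (hdist : ∀ i : Fin (n - 1), Measure.map (X i) ℙ
      = expMeasure ((((i : ℕ) : ℝ) + 1) / 2)) :
    ∀ j : ℕ, 1 ≤ j →
      (∫ ω, (∑ i, X i ω) ^ j ∂ℙ)
        = (j.factorial : ℝ) * 2 ^ j *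
            ∑' f : {f : Fin j → ℕ // Monotone f ∧ ∀ i, 1 ≤ f i ∧ f i ≤ n - 1},
              ∏ i, 1 / (f.1 i : ℝ) :=
  stmt_11_general n X hmeas hind hdist
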